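/- Let T be a bounded self-adjoint operator on a real Hilbert space H with ⟨u, T u⟩ ≥ 0 for all u, let E be a finite-dimensional subspace of H with T(E) ⊆ E and ⟨u, T u⟩ ≥ μ ‖u‖² for all u ∈ E, where μ > 0, and let Φ be a closed subspace of H with d_2(E, Φ) < 1. Then for every nonzero q ∈ P_Φ(E), one has ⟨q, T q⟩ ≥ (1 − d_2(E, Φ)²) · μ · ‖q‖². -/

import Mathlib

/-!
Write `q = P_Φ p` with `p ∈ E` and `s = P_E q`. Pythagoras for `Φ ⊕ Φᗮ` together with
`‖P_Φᗮ p‖ ≤ d₂ ‖p‖` gives `(1 - d₂²) ‖p‖² ≤ ‖q‖²`, while `‖q‖² = ⟪q, p⟫ = ⟪s, p⟫ ≤ ‖s‖ ‖p‖`;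
eliminating `‖p‖` yields `(1 - d₂²) ‖q‖² ≤ ‖s‖²`. As `T` is symmetric and leaves `E` invariant,
it also leaves `Eᗮ` invariant, so `⟪q, T q⟫ = ⟪s, T s⟫ + ⟪q - s, T (q - s)⟫ ≥ μ ‖s‖²`.
-/

open scoped RealInnerProductSpace ENNReal
open Submodule Filter

noncomputable section

variable {H : Type*} [NormedAddCommGroup H] [InnerProductSpace ℝ H] [CompleteSpace H]

/-- Orthogonal projection onto `U`, as an operator `H → H` (defined to be `0` in the
degenerate case where `U` admits no orthogonal projection). -/
noncomputable def proj (U : Submodule ℝ H) : H →L[ℝ] H := by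
  classical
  exact if h : HasOrthogonalProjection U then
    (haveI := h; U.subtypeL ∘L orthogonalProjection U)
  else 0

/-- Squared Hilbert–Schmidt norm of an operator, computed in a fixed Hilbert basis of `H`. -/
noncomputable def hsNormSq (A : H →L[ℝ] H) : ℝ≥0∞ :=
  ∑' i : (exists_hilbertBasis ℝ H).choose,
    (‖A ((exists_hilbertBasis ℝ H).choose_spec.choose i)‖₊ : ℝ≥0∞) ^ 2

/-- Hilbert–Schmidt (Frobenius) norm of an operator. -/
noncomputable def hsNorm (A : H →L[ℝ] H) : ℝ := Real.sqrt (hsNormSq A).toReal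

/-- Projection distance `d_F(U, W) = ‖P_{Wᗮ} P_U‖_F`. -/
noncomputable def dF (U W : Submodule ℝ H) : ℝ := hsNorm ((proj Wᗮ) ∘L (proj U))

/-- Gap distance `d₂(U, W) = ‖P_{Wᗮ} P_U‖₂`. -/
noncomputable def d2 (U W : Submodule ℝ H) : ℝ := ‖(proj Wᗮ) ∘L (proj U)‖

end

lemma mul_sq_le_sq_of_mul_sq_le_sq_of_sq_le_mul {k a b c : ℝ} (hk : k * b ^ 2 ≤ a ^ 2)
    (ha : a ^ 2 ≤ c * b) : k * a ^ 2 ≤ c ^ 2 := by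
  rcases le_or_gt k 0 with hk0 | hk0
  · nlinarith [sq_nonneg a, sq_nonneg c]
  rcases eq_or_lt_of_le (sq_nonneg a) with ha0 | ha0
  · rw [← ha0]; nlinarith [sq_nonneg c]
  have : a ^ 2 * a ^ 2 ≤ (c * b) ^ 2 := by nlinarith [sq_nonneg a]
  nlinarith [sq_nonneg c]

section

variable {H : Type*} [NormedAddCommGroup H] [InnerProductSpace ℝ H]

lemma norm_sq_starProjection_le_mul_norm (K : Submodule ℝ H) [K.HasOrthogonalProjection]
    {E : Submodule ℝ H} [E.HasOrthogonalProjection] {p : H} (hp : p ∈ E) :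
    ‖K.starProjection p‖ ^ 2 ≤ ‖E.starProjection (K.starProjection p)‖ * ‖p‖ :=
  calc ‖K.starProjection p‖ ^ 2 = ⟪K.starProjection p, p⟫ := by
        rw [← real_inner_self_eq_norm_sq, ← K.inner_starProjection_left_eq_right,
          Submodule.starProjection_eq_self_iff.mpr (K.starProjection_apply_mem p)]
    _ = ⟪E.starProjection (K.starProjection p), p⟫ := by
        rw [E.inner_starProjection_left_eq_right, Submodule.starProjection_eq_self_iff.mpr hp]
    _ ≤ _ := real_inner_le_norm _ _

lemma inner_starProjection_apply_le {T : H →ₗ[ℝ] H} (hT : T.IsSymmetric)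
    (hpos : ∀ u, 0 ≤ ⟪u, T u⟫) {E : Submodule ℝ H} [E.HasOrthogonalProjection]
    (hE : E ∈ Module.End.invtSubmodule T) (x : H) :
    ⟪E.starProjection x, T (E.starProjection x)⟫ ≤ ⟪x, T x⟫ := by
  set s := E.starProjection x
  set w := x - s
  have hs : s ∈ E := E.starProjection_apply_mem x
  have hw : w ∈ Eᗮ := E.sub_starProjection_mem_orthogonal x
  have hTs : T s ∈ E := hE hs
  have hTw : T w ∈ Eᗮ := hT.orthogonalComplement_mem_invtSubmodule hE hw
  have hsplit : ⟪x, T x⟫ = ⟪s, T s⟫ + ⟪w, T w⟫ := by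
    rw [← add_sub_cancel s x, map_add, inner_add_left, inner_add_right, inner_add_right,
      Submodule.inner_right_of_mem_orthogonal hs hTw,
      Submodule.inner_left_of_mem_orthogonal hTs hw]
    ring
  linarith [hpos w]

lemma proj_eq_starProjection (U : Submodule ℝ H) [h : U.HasOrthogonalProjection] :
    proj U = U.starProjection := by
  simp [proj, dif_pos h, Submodule.starProjection]

lemma norm_starProjection_orthogonal_le_d2_mul {E Φ : Submodule ℝ H} [E.HasOrthogonalProjection]
    [Φ.HasOrthogonalProjection] {p : H} (hp : p ∈ E) :
    ‖Φᗮ.starProjection p‖ ≤ d2 E Φ * ‖p‖ :=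
  calc ‖Φᗮ.starProjection p‖ = ‖(proj Φᗮ ∘L proj E) p‖ := by
        rw [ContinuousLinearMap.comp_apply, proj_eq_starProjection E,
          Submodule.starProjection_eq_self_iff.mpr hp, proj_eq_starProjection]
    _ ≤ d2 E Φ * ‖p‖ := (proj Φᗮ ∘L proj E).le_opNorm p

lemma one_sub_d2_sq_mul_norm_sq_le {E Φ : Submodule ℝ H} [E.HasOrthogonalProjection]
    [Φ.HasOrthogonalProjection] {p : H} (hp : p ∈ E) :
    (1 - d2 E Φ ^ 2) * ‖p‖ ^ 2 ≤ ‖Φ.starProjection p‖ ^ 2 := by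
  have hpyth := Φ.norm_sq_eq_add_norm_sq_starProjection p
  have : ‖Φᗮ.starProjection p‖ ^ 2 ≤ (d2 E Φ * ‖p‖) ^ 2 := by
    gcongr; exact norm_starProjection_orthogonal_le_d2_mul hp
  nlinarith

theorem stmt18_general {H : Type*} [NormedAddCommGroup H] [InnerProductSpace ℝ H] [CompleteSpace H]
    (T : H →L[ℝ] H)
    (hTsa : ∀ x y : H, ⟪T x, y⟫ = ⟪x, T y⟫)
    (hTpos : ∀ u : H, 0 ≤ ⟪u, T u⟫)
    (E : Submodule ℝ H) (hEfd : FiniteDimensional ℝ E)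
    (hTE : ∀ x ∈ E, T x ∈ E)
    (μ : ℝ) (hμ : 0 < μ)
    (hTlow : ∀ u ∈ E, μ * ‖u‖ ^ 2 ≤ ⟪u, T u⟫)
    (Φ : Submodule ℝ H) (hΦcl : IsClosed (Φ : Set H)) :
    ∀ q ∈ Submodule.map ((proj Φ : H →L[ℝ] H) : H →ₗ[ℝ] H) E, q ≠ 0 →
      (1 - d2 E Φ ^ 2) * μ * ‖q‖ ^ 2 ≤ ⟪q, T q⟫ := by
  rintro _ ⟨p, hpE, rfl⟩ -
  have : CompleteSpace Φ := hΦcl.completeSpace_coe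
  rw [ContinuousLinearMap.coe_coe, proj_eq_starProjection]
  set q := Φ.starProjection p
  have hq : (1 - d2 E Φ ^ 2) * ‖q‖ ^ 2 ≤ ‖E.starProjection q‖ ^ 2 :=
    mul_sq_le_sq_of_mul_sq_le_sq_of_sq_le_mul (one_sub_d2_sq_mul_norm_sq_le hpE)
      (norm_sq_starProjection_le_mul_norm Φ hpE)
  calc (1 - d2 E Φ ^ 2) * μ * ‖q‖ ^ 2 = μ * ((1 - d2 E Φ ^ 2) * ‖q‖ ^ 2) := by ring
    _ ≤ μ * ‖E.starProjection q‖ ^ 2 := by gcongr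
    _ ≤ ⟪E.starProjection q, T (E.starProjection q)⟫ := hTlow _ (E.starProjection_apply_mem q)
    _ ≤ ⟪q, T q⟫ := inner_starProjection_apply_le hTsa hTpos hTE q

/-- If `T` is self-adjoint and nonnegative, `E` is a finite-dimensional
invariant subspace on which `⟨u, T u⟩ ≥ μ ‖u‖²` with `μ > 0`, and `Φ` is a closed subspace
with `d₂(E, Φ) < 1`, then every nonzero `q ∈ P_Φ(E)` satisfies
`⟨q, T q⟩ ≥ (1 − d₂(E, Φ)²) μ ‖q‖²`. -/
theorem stmt18 {H : Type*} [NormedAddCommGroup H] [InnerProductSpace ℝ H] [CompleteSpace H]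
    (T : H →L[ℝ] H)
    (hTsa : ∀ x y : H, ⟪T x, y⟫ = ⟪x, T y⟫)
    (hTpos : ∀ u : H, 0 ≤ ⟪u, T u⟫)
    (E : Submodule ℝ H) (hEfd : FiniteDimensional ℝ E)
    (hTE : ∀ x ∈ E, T x ∈ E)
    (μ : ℝ) (hμ : 0 < μ)
    (hTlow : ∀ u ∈ E, μ * ‖u‖ ^ 2 ≤ ⟪u, T u⟫)
    (Φ : Submodule ℝ H) (hΦcl : IsClosed (Φ : Set H))
    (hd2 : d2 E Φ < 1) :
    ∀ q ∈ Submodule.map ((proj Φ : H →L[ℝ] H) : H →ₗ[ℝ] H) E, q ≠ 0 →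
      (1 - d2 E Φ ^ 2) * μ * ‖q‖ ^ 2 ≤ ⟪q, T q⟫ :=
  stmt18_general T hTsa hTpos E hEfd hTE μ hμ hTlow Φ hΦcl

end
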